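/- arXiv:2511.09220 — 5 statements merged into one kernel-verified Lean document; each statement's English description precedes it below -/
import Mathlib

section
/- Fix constants 0 < λ1 < λ2. Let γ^N, γ : [0,∞) → ℝ be functions and let η^N, η ∈ Λ^{λ1,λ2}. Suppose there exist continuous strictly increasing bijections λ^N : [0,∞) → [0,∞) with λ^N(0) = 0 such that, for every T > 0, sup_{t≤T} |λ^N(t) − t| → 0 and sup_{t≤T} |γ^N(λ^N(t)) − γ(t)| → 0 as N → ∞, and suppose sup_{t≤T} |η^N(t) − η(t)| → 0 for every T > 0. Then the functions λ̃^N := (η^N)^{-1} ∘ λ^N ∘ η are continuous strictly increasing bijections of [0,∞) with λ̃^N(0) = 0, and for every T > 0 one has sup_{t≤T} |λ̃^N(t) − t| → 0 and sup_{t≤T} |γ^N(η^N(λ̃^N(t))) − γ(η(t))| → 0 as N → ∞. -/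
/-!
The bi-Lipschitz bounds make `η` a homeomorphism of `[0,∞)` and the inverses `(η^N)⁻¹` uniformly
`λ1⁻¹`-Lipschitz. Hence `λ̃^N t - t = (η^N)⁻¹ (λ^N (η t)) - (η^N)⁻¹ (η^N t)` is controlled by
`λ^N (η t) - η^N t`, which tends to `0` uniformly on `[0, T]` because both terms converge uniformly
to `η t` (with `η [0, T] ⊆ [0, λ2 T]`). The second limit is the hypothesis on `γ^N ∘ λ^N`
precomposed with `η`, since `η^N ∘ λ̃^N = λ^N ∘ η`.
-/

open Filter Topology Set NNReal

/-- The class `Λ^{a,b}`; for `0 < a` its other requirements (continuity, strict monotonicity,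
bijectivity of `[0,∞)`) follow from these bounds. -/
structure IsLambda (a b : ℝ) (η : ℝ → ℝ) : Prop where
  map_zero : η 0 = 0
  bounds : ∀ s t : ℝ, 0 ≤ s → s < t → a * (t - s) ≤ η t - η s ∧ η t - η s ≤ b * (t - s)

namespace IsLambda

variable {a b : ℝ} {η g : ℝ → ℝ}

theorem bounds_of_le (hη : IsLambda a b η) {s t : ℝ} (hs : 0 ≤ s) (hst : s ≤ t) :
    a * (t - s) ≤ η t - η s ∧ η t - η s ≤ b * (t - s) := by
  rcases hst.eq_or_lt with rfl | hlt
  · simp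
  · exact hη.bounds s t hs hlt

theorem le (hη : IsLambda a b η) : a ≤ b := by
  have h := hη.bounds 0 1 le_rfl one_pos
  linarith [h.1.trans h.2]

theorem mul_le_le_mul (hη : IsLambda a b η) {t : ℝ} (ht : 0 ≤ t) : a * t ≤ η t ∧ η t ≤ b * t := by
  simpa only [hη.map_zero, sub_zero] using hη.bounds_of_le le_rfl ht

theorem nonneg (hη : IsLambda a b η) (ha : 0 ≤ a) {t : ℝ} (ht : 0 ≤ t) : 0 ≤ η t :=
  (mul_nonneg ha ht).trans (hη.mul_le_le_mul ht).1

theorem mapsTo (hη : IsLambda a b η) (ha : 0 ≤ a) : MapsTo η (Ici 0) (Ici 0) :=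
  fun _ ht => hη.nonneg ha ht

theorem mapsTo_Icc (hη : IsLambda a b η) (ha : 0 ≤ a) (T : ℝ) :
    MapsTo η (Icc 0 T) (Icc 0 (b * T)) := fun _ ht =>
  ⟨hη.nonneg ha ht.1,
    (hη.mul_le_le_mul ht.1).2.trans (mul_le_mul_of_nonneg_left ht.2 (ha.trans hη.le))⟩

theorem mul_abs_sub_le (hη : IsLambda a b η) {s t : ℝ} (hs : 0 ≤ s) (ht : 0 ≤ t) :
    a * |t - s| ≤ |η t - η s| := by
  wlog hst : s ≤ t generalizing s t
  · rw [abs_sub_comm, abs_sub_comm (η t)]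
    exact this ht hs (le_of_not_ge hst)
  rw [abs_of_nonneg (sub_nonneg.2 hst)]
  exact (hη.bounds_of_le hs hst).1.trans (le_abs_self _)

theorem abs_sub_le_mul (hη : IsLambda a b η) (ha : 0 ≤ a) {s t : ℝ} (hs : 0 ≤ s) (ht : 0 ≤ t) :
    |η t - η s| ≤ b * |t - s| := by
  wlog hst : s ≤ t generalizing s t
  · rw [abs_sub_comm, abs_sub_comm t]
    exact this ht hs (le_of_not_ge hst)
  obtain ⟨hlow, hup⟩ := hη.bounds_of_le hs hst
  have hηst : 0 ≤ η t - η s := (mul_nonneg ha (sub_nonneg.2 hst)).trans hlow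
  rwa [abs_of_nonneg (sub_nonneg.2 hst), abs_of_nonneg hηst]

theorem lipschitzOnWith (hη : IsLambda a b η) (ha : 0 ≤ a) :
    LipschitzOnWith b.toNNReal η (Ici 0) :=
  LipschitzOnWith.of_dist_le_mul fun t ht s hs => by
    rw [Real.dist_eq, Real.dist_eq, Real.coe_toNNReal _ (ha.trans hη.le)]
    exact hη.abs_sub_le_mul ha hs ht

theorem continuousOn (hη : IsLambda a b η) (ha : 0 ≤ a) : ContinuousOn η (Ici 0) :=
  (hη.lipschitzOnWith ha).continuousOn

theorem strictMonoOn (hη : IsLambda a b η) (ha : 0 < a) : StrictMonoOn η (Ici 0) :=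
  fun s hs t _ hst => sub_pos.1 ((mul_pos ha (sub_pos.2 hst)).trans_le (hη.bounds s t hs hst).1)

theorem surjOn (hη : IsLambda a b η) (ha : 0 < a) : SurjOn η (Ici 0) (Ici 0) := by
  intro u (hu : 0 ≤ u)
  have hua : 0 ≤ u / a := div_nonneg hu ha.le
  have hu_le : u ≤ η (u / a) := by
    simpa only [mul_div_cancel₀ u ha.ne'] using (hη.mul_le_le_mul hua).1
  obtain ⟨t, ht, rfl⟩ :=
    intermediate_value_Icc hua ((hη.continuousOn ha.le).mono Icc_subset_Ici_self)
      ⟨by rwa [hη.map_zero], hu_le⟩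
  exact ⟨t, ht.1, rfl⟩

theorem lipschitzOnWith_of_rightInvOn (hη : IsLambda a b η) (ha : 0 < a)
    (hg : RightInvOn g η (Ici 0)) (hg₀ : MapsTo g (Ici 0) (Ici 0)) :
    LipschitzOnWith a⁻¹.toNNReal g (Ici 0) :=
  LipschitzOnWith.of_dist_le_mul fun x hx y hy => by
    rw [Real.dist_eq, Real.dist_eq, Real.coe_toNNReal _ (inv_nonneg.2 ha.le), le_inv_mul_iff₀ ha]
    simpa only [hg hx, hg hy] using hη.mul_abs_sub_le (hg₀ hy) (hg₀ hx)

theorem strictMonoOn_of_rightInvOn (hη : IsLambda a b η) (ha : 0 < a)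
    (hg : RightInvOn g η (Ici 0)) (hg₀ : MapsTo g (Ici 0) (Ici 0)) : StrictMonoOn g (Ici 0) := by
  intro x hx y hy hxy
  by_contra! hyx
  have := (hη.strictMonoOn ha).monotoneOn (hg₀ hy) (hg₀ hx) hyx
  rw [hg hx, hg hy] at this
  exact hxy.not_ge this

end IsLambda

theorem tendstoUniformlyOn_lipschitzOnWith_comp {ι α β γ : Type*}
    [PseudoMetricSpace β] [PseudoMetricSpace γ] {l : Filter ι} {g : ι → β → γ} {K : ℝ≥0}
    {S : Set β} {F G : ι → α → β} {f : α → β} {φ : α → γ} {s : Set α}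
    (hg : ∀ i, LipschitzOnWith K (g i) S) (hFS : ∀ i, MapsTo (F i) s S)
    (hGS : ∀ i, MapsTo (G i) s S) (hgF : ∀ i, ∀ x ∈ s, g i (F i x) = φ x)
    (hF : TendstoUniformlyOn F f l s) (hG : TendstoUniformlyOn G f l s) :
    TendstoUniformlyOn (fun i x => g i (G i x)) φ l s := by
  rw [Metric.tendstoUniformlyOn_iff] at hF hG ⊢
  intro ε hε
  have hδ : 0 < ε / (2 * (K + 1)) := by positivity
  filter_upwards [hF _ hδ, hG _ hδ] with i hFi hGi x hx
  calc dist (φ x) (g i (G i x))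
      = dist (g i (F i x)) (g i (G i x)) := by rw [hgF i x hx]
    _ ≤ K * dist (F i x) (G i x) := (hg i).dist_le_mul _ (hFS i hx) _ (hGS i hx)
    _ ≤ (K + 1) * (dist (f x) (F i x) + dist (f x) (G i x)) := by
        gcongr
        · linarith
        · exact dist_triangle_left _ _ _
    _ < (K + 1) * (ε / (2 * (K + 1)) + ε / (2 * (K + 1))) := by
        gcongr
        · exact hFi x hx
        · exact hGi x hx
    _ = ε := by field_simp; ring

theorem stmt1_general (lam1 lam2 : ℝ) (hl1 : 0 < lam1)
    (γN : ℕ → ℝ → ℝ) (γ : ℝ → ℝ)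
    (ηN : ℕ → ℝ → ℝ) (η : ℝ → ℝ) (ηNinv : ℕ → ℝ → ℝ)
    -- η^N, η ∈ Λ^{λ1,λ2}:
    (hηN0 : ∀ N, ηN N 0 = 0)
    (hηNlip : ∀ N, ∀ s t : ℝ, 0 ≤ s → s < t →
      lam1 * (t - s) ≤ ηN N t - ηN N s ∧ ηN N t - ηN N s ≤ lam2 * (t - s))
    (hη0 : η 0 = 0)
    (hηlip : ∀ s t : ℝ, 0 ≤ s → s < t →
      lam1 * (t - s) ≤ η t - η s ∧ η t - η s ≤ lam2 * (t - s))
    -- the inverse of η^N as a bijection of [0,∞):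
    (hinv_left : ∀ N, ∀ t : ℝ, 0 ≤ t → ηNinv N (ηN N t) = t)
    (hinv_right : ∀ N, ∀ x : ℝ, 0 ≤ x → ηN N (ηNinv N x) = x)
    (hinv_nonneg : ∀ N, ∀ x : ℝ, 0 ≤ x → 0 ≤ ηNinv N x)
    -- the time changes λ^N : continuous strictly increasing bijections of [0,∞), λ^N 0 = 0:
    (lam : ℕ → ℝ → ℝ)
    (hlam0 : ∀ N, lam N 0 = 0)
    (hlamcont : ∀ N, ContinuousOn (lam N) (Ici 0))
    (hlammono : ∀ N, StrictMonoOn (lam N) (Ici 0))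
    (hlammaps : ∀ N, MapsTo (lam N) (Ici 0) (Ici 0))
    (hlamsurj : ∀ N, SurjOn (lam N) (Ici 0) (Ici 0))
    -- the convergence hypotheses:
    (hlamconv : ∀ T : ℝ, 0 < T →
      TendstoUniformlyOn (fun N => lam N) id atTop (Icc 0 T))
    (hγconv : ∀ T : ℝ, 0 < T →
      TendstoUniformlyOn (fun N t => γN N (lam N t)) γ atTop (Icc 0 T))
    (hηconv : ∀ T : ℝ, 0 < T →
      TendstoUniformlyOn (fun N => ηN N) η atTop (Icc 0 T)) :
    (∀ N, ηNinv N (lam N (η 0)) = 0) ∧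
    (∀ N, ContinuousOn (fun t => ηNinv N (lam N (η t))) (Ici 0)) ∧
    (∀ N, StrictMonoOn (fun t => ηNinv N (lam N (η t))) (Ici 0)) ∧
    (∀ N, MapsTo (fun t => ηNinv N (lam N (η t))) (Ici 0) (Ici 0)) ∧
    (∀ N, SurjOn (fun t => ηNinv N (lam N (η t))) (Ici 0) (Ici 0)) ∧
    (∀ T : ℝ, 0 < T →
      TendstoUniformlyOn (fun N t => ηNinv N (lam N (η t))) id atTop (Icc 0 T)) ∧
    (∀ T : ℝ, 0 < T →
      TendstoUniformlyOn (fun N t => γN N (ηN N (ηNinv N (lam N (η t)))))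
        (fun t => γ (η t)) atTop (Icc 0 T)) := by
  have hη : IsLambda lam1 lam2 η := ⟨hη0, hηlip⟩
  have hηN : ∀ N, IsLambda lam1 lam2 (ηN N) := fun N => ⟨hηN0 N, hηNlip N⟩
  have hlam2 : 0 < lam2 := hl1.trans_le hη.le
  have hinv_lip : ∀ N, LipschitzOnWith lam1⁻¹.toNNReal (ηNinv N) (Ici 0) := fun N =>
    (hηN N).lipschitzOnWith_of_rightInvOn hl1 (hinv_right N) (hinv_nonneg N)
  have hcomp_maps : ∀ N, MapsTo (fun t => lam N (η t)) (Ici 0) (Ici 0) :=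
    fun N => (hlammaps N).comp (hη.mapsTo hl1.le)
  refine ⟨fun N => ?_, fun N => ?_, fun N => ?_, fun N t ht => hinv_nonneg N _ (hcomp_maps N ht),
    fun N => ?_, fun T hT => ?_, fun T hT => ?_⟩
  · simpa only [hη0, hlam0, hηN0] using hinv_left N 0 le_rfl
  · exact (hinv_lip N).continuousOn.comp
      ((hlamcont N).comp (hη.continuousOn hl1.le) (hη.mapsTo hl1.le)) (hcomp_maps N)
  · exact ((hηN N).strictMonoOn_of_rightInvOn hl1 (hinv_right N) (hinv_nonneg N)).comp
      ((hlammono N).comp (hη.strictMonoOn hl1) (hη.mapsTo hl1.le)) (hcomp_maps N)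
  · exact (LeftInvOn.surjOn (hinv_left N) ((hηN N).mapsTo hl1.le)).comp
      ((hlamsurj N).comp (hη.surjOn hl1))
  · have hlamη := ((hlamconv (lam2 * T) (by positivity)).comp η).mono (hη.mapsTo_Icc hl1.le T)
    exact tendstoUniformlyOn_lipschitzOnWith_comp
      hinv_lip
      (fun N t ht => (hηN N).nonneg hl1.le ht.1) (fun N t ht => hcomp_maps N ht.1)
      (fun N t ht => hinv_left N t ht.1) (hηconv T hT) hlamη
  · refine (((hγconv (lam2 * T) (by positivity)).comp η).mono (hη.mapsTo_Icc hl1.le T)).congr ?_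
    filter_upwards with N t ht
    simp only [Function.comp_apply, hinv_right N _ (hcomp_maps N ht.1)]

/-- Fix constants `0 < λ1 < λ2`. Let `γ^N, γ : [0,∞) → ℝ` and
`η^N, η ∈ Λ^{λ1,λ2}` (encoded by `η 0 = 0` together with the bi-Lipschitz bounds
`λ1 (t-s) ≤ η t - η s ≤ λ2 (t-s)` on `[0,∞)`, with inverses `ηinv` on `[0,∞)`).
Suppose there are continuous strictly increasing bijections `λ^N` of `[0,∞)` with
`λ^N 0 = 0` such that `sup_{t≤T} |λ^N t - t| → 0` and
`sup_{t≤T} |γ^N (λ^N t) - γ t| → 0` for every `T > 0`, and that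
`sup_{t≤T} |η^N t - η t| → 0` for every `T > 0`. Then
`λ̃^N := (η^N)⁻¹ ∘ λ^N ∘ η` are continuous strictly increasing bijections of `[0,∞)`
with `λ̃^N 0 = 0`, and for every `T > 0`,
`sup_{t≤T} |λ̃^N t - t| → 0` and `sup_{t≤T} |γ^N (η^N (λ̃^N t)) - γ (η t)| → 0`. -/
theorem stmt1 (lam1 lam2 : ℝ) (hl1 : 0 < lam1) (hl12 : lam1 < lam2)
    (γN : ℕ → ℝ → ℝ) (γ : ℝ → ℝ)
    (ηN : ℕ → ℝ → ℝ) (η : ℝ → ℝ) (ηNinv : ℕ → ℝ → ℝ)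
    -- η^N, η ∈ Λ^{λ1,λ2}:
    (hηN0 : ∀ N, ηN N 0 = 0)
    (hηNlip : ∀ N, ∀ s t : ℝ, 0 ≤ s → s < t →
      lam1 * (t - s) ≤ ηN N t - ηN N s ∧ ηN N t - ηN N s ≤ lam2 * (t - s))
    (hη0 : η 0 = 0)
    (hηlip : ∀ s t : ℝ, 0 ≤ s → s < t →
      lam1 * (t - s) ≤ η t - η s ∧ η t - η s ≤ lam2 * (t - s))
    -- the inverse of η^N as a bijection of [0,∞):
    (hinv_left : ∀ N, ∀ t : ℝ, 0 ≤ t → ηNinv N (ηN N t) = t)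
    (hinv_right : ∀ N, ∀ x : ℝ, 0 ≤ x → ηN N (ηNinv N x) = x)
    (hinv_nonneg : ∀ N, ∀ x : ℝ, 0 ≤ x → 0 ≤ ηNinv N x)
    -- the time changes λ^N : continuous strictly increasing bijections of [0,∞), λ^N 0 = 0:
    (lam : ℕ → ℝ → ℝ)
    (hlam0 : ∀ N, lam N 0 = 0)
    (hlamcont : ∀ N, ContinuousOn (lam N) (Ici 0))
    (hlammono : ∀ N, StrictMonoOn (lam N) (Ici 0))
    (hlammaps : ∀ N, MapsTo (lam N) (Ici 0) (Ici 0))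
    (hlamsurj : ∀ N, SurjOn (lam N) (Ici 0) (Ici 0))
    -- the convergence hypotheses:
    (hlamconv : ∀ T : ℝ, 0 < T →
      TendstoUniformlyOn (fun N => lam N) id atTop (Icc 0 T))
    (hγconv : ∀ T : ℝ, 0 < T →
      TendstoUniformlyOn (fun N t => γN N (lam N t)) γ atTop (Icc 0 T))
    (hηconv : ∀ T : ℝ, 0 < T →
      TendstoUniformlyOn (fun N => ηN N) η atTop (Icc 0 T)) :
    (∀ N, ηNinv N (lam N (η 0)) = 0) ∧
    (∀ N, ContinuousOn (fun t => ηNinv N (lam N (η t))) (Ici 0)) ∧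
    (∀ N, StrictMonoOn (fun t => ηNinv N (lam N (η t))) (Ici 0)) ∧
    (∀ N, MapsTo (fun t => ηNinv N (lam N (η t))) (Ici 0) (Ici 0)) ∧
    (∀ N, SurjOn (fun t => ηNinv N (lam N (η t))) (Ici 0) (Ici 0)) ∧
    (∀ T : ℝ, 0 < T →
      TendstoUniformlyOn (fun N t => ηNinv N (lam N (η t))) id atTop (Icc 0 T)) ∧
    (∀ T : ℝ, 0 < T →
      TendstoUniformlyOn (fun N t => γN N (ηN N (ηNinv N (lam N (η t)))))
        (fun t => γ (η t)) atTop (Icc 0 T)) :=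
  stmt1_general lam1 lam2 hl1 γN γ ηN η ηNinv hηN0 hηNlip hη0 hηlip hinv_left hinv_right hinv_nonneg
    lam hlam0 hlamcont hlammono hlammaps hlamsurj hlamconv hγconv hηconv
end

section
/- Fix constants 0 < λ1 < λ2. Let η', η ∈ Λ^{λ1,λ2} and let λ : [0,∞) → [0,∞) be any function. Then for every T > 0, sup_{t≤T} |(η')^{-1}(λ(η(t))) − t| ≤ (1/λ1) ( sup_{s ≤ λ2·T} |λ(s) − s| + sup_{t≤T} |η(t) − η'(t)| ). In particular, the inverse of any element η' of Λ^{λ1,λ2} satisfies (η')^{-1}(x) − (η')^{-1}(y) ≤ (x−y)/λ1 for all 0 ≤ y < x. -/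
open Filter Topology Set

/-! The lower bi-Lipschitz bound `λ1 (t - s) ≤ η' t - η' s` makes `η'⁻¹` Lipschitz with constant
`1/λ1`: comparing `η'⁻¹(λ(η t))` with `t` through `η'` bounds
`|η'⁻¹(λ(η t)) - t|` by `|λ(η t) - η' t| / λ1 ≤ (|λ(η t) - η t| + |η t - η' t|) / λ1`, and the
upper bound `η t ≤ λ2 t` places `η t` inside the range `[0, λ2 T]` of the first supremum. -/

theorem abs_sub_le_abs_sub_div_of_expanding {f : ℝ → ℝ} {c s t : ℝ} (hc : 0 < c)
    (hf : ∀ s t : ℝ, 0 ≤ s → s < t → c * (t - s) ≤ f t - f s) (hs : 0 ≤ s) (ht : 0 ≤ t) :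
    |t - s| ≤ |f t - f s| / c := by
  rw [le_div_iff₀ hc]
  rcases lt_trichotomy s t with hst | rfl | hts
  · have := hf s t hs hst
    rw [abs_of_pos (sub_pos.2 hst), abs_of_pos (by nlinarith)]
    linarith
  · simp
  · have := hf t s ht hts
    rw [abs_sub_comm t, abs_sub_comm (f t), abs_of_pos (sub_pos.2 hts), abs_of_pos (by nlinarith)]
    linarith

theorem abs_rightInverse_sub_le {f g : ℝ → ℝ} {c x t : ℝ} (hc : 0 < c)
    (hf : ∀ s t : ℝ, 0 ≤ s → s < t → c * (t - s) ≤ f t - f s)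
    (hfg : ∀ x : ℝ, 0 ≤ x → f (g x) = x) (hg : ∀ x : ℝ, 0 ≤ x → 0 ≤ g x)
    (hx : 0 ≤ x) (ht : 0 ≤ t) :
    |g x - t| ≤ |x - f t| / c := by
  simpa only [hfg x hx] using abs_sub_le_abs_sub_div_of_expanding hc hf ht (hg x hx)

theorem mem_Icc_of_bilipschitz {η : ℝ → ℝ} {c C T t : ℝ} (hc : 0 ≤ c) (hC : 0 ≤ C)
    (h0 : η 0 = 0)
    (hη : ∀ s t : ℝ, 0 ≤ s → s < t → c * (t - s) ≤ η t - η s ∧ η t - η s ≤ C * (t - s))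
    (ht : t ∈ Icc 0 T) :
    η t ∈ Icc 0 (C * T) := by
  rcases ht.1.eq_or_lt with rfl | hpos
  · simp [h0, mul_nonneg hC ht.2]
  · obtain ⟨hlow, hup⟩ := hη 0 t le_rfl hpos
    simp only [h0, sub_zero] at hlow hup
    exact ⟨by nlinarith, hup.trans (mul_le_mul_of_nonneg_left ht.2 hC)⟩

theorem ENNReal.ofReal_add_div {a b c : ℝ} (ha : 0 ≤ a) (hb : 0 ≤ b) (hc : 0 ≤ c) :
    ENNReal.ofReal ((a + b) / c) =
      ENNReal.ofReal (1 / c) * (ENNReal.ofReal a + ENNReal.ofReal b) := by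
  rw [div_eq_mul_inv, mul_comm, ← ENNReal.ofReal_add ha hb, one_div,
    ← ENNReal.ofReal_mul (inv_nonneg.2 hc)]

theorem stmt2_general (lam1 lam2 : ℝ) (hl1 : 0 < lam1) (hl12 : lam1 < lam2)
    (η' η : ℝ → ℝ) (η'inv : ℝ → ℝ)
    (hη'lip : ∀ s t : ℝ, 0 ≤ s → s < t →
      lam1 * (t - s) ≤ η' t - η' s ∧ η' t - η' s ≤ lam2 * (t - s))
    (hη0 : η 0 = 0)
    (hηlip : ∀ s t : ℝ, 0 ≤ s → s < t →
      lam1 * (t - s) ≤ η t - η s ∧ η t - η s ≤ lam2 * (t - s))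
    (hinv_right : ∀ x : ℝ, 0 ≤ x → η' (η'inv x) = x)
    (hinv_nonneg : ∀ x : ℝ, 0 ≤ x → 0 ≤ η'inv x)
    (lam : ℝ → ℝ) (hlam : MapsTo lam (Ici 0) (Ici 0)) :
    (∀ T : ℝ, 0 < T →
      (⨆ t ∈ Icc (0:ℝ) T, ENNReal.ofReal |η'inv (lam (η t)) - t|) ≤
        ENNReal.ofReal (1 / lam1) *
          ((⨆ s ∈ Icc (0:ℝ) (lam2 * T), ENNReal.ofReal |lam s - s|) +
            ⨆ t ∈ Icc (0:ℝ) T, ENNReal.ofReal |η t - η' t|)) ∧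
    (∀ x y : ℝ, 0 ≤ y → y < x → η'inv x - η'inv y ≤ (x - y) / lam1) := by
  have hη'low s t hs hst := (hη'lip s t hs hst).1
  refine ⟨fun T _ => iSup₂_le fun t ht => ?_, fun x y hy hxy => ?_⟩
  · have hηt := mem_Icc_of_bilipschitz hl1.le (hl1.trans hl12).le hη0 hηlip ht
    have hpt : |η'inv (lam (η t)) - t| ≤ (|lam (η t) - η t| + |η t - η' t|) / lam1 :=
      (abs_rightInverse_sub_le hl1 hη'low hinv_right hinv_nonneg (hlam hηt.1) ht.1).trans
        (div_le_div_of_nonneg_right (abs_sub_le _ _ _) hl1.le)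
    calc ENNReal.ofReal |η'inv (lam (η t)) - t|
        ≤ ENNReal.ofReal ((|lam (η t) - η t| + |η t - η' t|) / lam1) :=
          ENNReal.ofReal_le_ofReal hpt
      _ = ENNReal.ofReal (1 / lam1) *
          (ENNReal.ofReal |lam (η t) - η t| + ENNReal.ofReal |η t - η' t|) :=
          ENNReal.ofReal_add_div (abs_nonneg _) (abs_nonneg _) hl1.le
      _ ≤ _ := by
          gcongr
          · exact le_iSup₂_of_le (η t) hηt le_rfl
          · exact le_iSup₂_of_le t ht le_rfl
  · have hxy' := abs_rightInverse_sub_le hl1 hη'low hinv_right hinv_nonneg (hy.trans hxy.le)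
      (hinv_nonneg y hy)
    rw [hinv_right y hy, abs_of_pos (sub_pos.2 hxy)] at hxy'
    exact (le_abs_self _).trans hxy'

/-- Fix `0 < λ1 < λ2`. Let `η', η ∈ Λ^{λ1,λ2}` (encoded by vanishing at `0`
and the bi-Lipschitz bounds on `[0,∞)`, with `η'inv` the inverse of `η'` as a bijection of
`[0,∞)`) and let `λ : [0,∞) → [0,∞)` be any function. Then for every `T > 0`,
`sup_{t≤T} |η'⁻¹(λ(η t)) − t| ≤ (1/λ1) (sup_{s ≤ λ2 T} |λ s − s| + sup_{t≤T} |η t − η' t|)`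
(the suprema are taken in `ℝ≥0∞` so that they are always well defined), and the inverse of
`η'` satisfies `η'⁻¹ x − η'⁻¹ y ≤ (x − y)/λ1` for all `0 ≤ y < x`. -/
theorem stmt2 (lam1 lam2 : ℝ) (hl1 : 0 < lam1) (hl12 : lam1 < lam2)
    (η' η : ℝ → ℝ) (η'inv : ℝ → ℝ)
    (hη'0 : η' 0 = 0)
    (hη'lip : ∀ s t : ℝ, 0 ≤ s → s < t →
      lam1 * (t - s) ≤ η' t - η' s ∧ η' t - η' s ≤ lam2 * (t - s))
    (hη0 : η 0 = 0)
    (hηlip : ∀ s t : ℝ, 0 ≤ s → s < t →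
      lam1 * (t - s) ≤ η t - η s ∧ η t - η s ≤ lam2 * (t - s))
    (hinv_left : ∀ t : ℝ, 0 ≤ t → η'inv (η' t) = t)
    (hinv_right : ∀ x : ℝ, 0 ≤ x → η' (η'inv x) = x)
    (hinv_nonneg : ∀ x : ℝ, 0 ≤ x → 0 ≤ η'inv x)
    (lam : ℝ → ℝ) (hlam : MapsTo lam (Ici 0) (Ici 0)) :
    (∀ T : ℝ, 0 < T →
      (⨆ t ∈ Icc (0:ℝ) T, ENNReal.ofReal |η'inv (lam (η t)) - t|) ≤
        ENNReal.ofReal (1 / lam1) *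
          ((⨆ s ∈ Icc (0:ℝ) (lam2 * T), ENNReal.ofReal |lam s - s|) +
            ⨆ t ∈ Icc (0:ℝ) T, ENNReal.ofReal |η t - η' t|)) ∧
    (∀ x y : ℝ, 0 ≤ y → y < x → η'inv x - η'inv y ≤ (x - y) / lam1) :=
  stmt2_general lam1 lam2 hl1 hl12 η' η η'inv hη'lip hη0 hηlip hinv_right hinv_nonneg lam hlam
end

section
/- Let α ∈ (0,2) and a₊, a₋ ≥ 0, and let ν be a probability measure on ℝ satisfying the stable tail condition of index α with parameters a₊, a₋. Then for every bounded continuous function G : ℝ → ℝ that vanishes on a neighborhood of 0, lim_{n→∞} n ∫_ℝ G(u · n^{−1/α}) ν(du) = ∫_{(0,∞)} G(z) a₊ z^{−α−1} dz + ∫_{(−∞,0)} G(z) a₋ |z|^{−α−1} dz. -/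
open MeasureTheory Filter Topology Set
open scoped NNReal

/-!
Let `κₙ` be `n` times the law of `u n^{-1/α}` under `ν`. The hypotheses say that the tails
`κₙ(x, ∞)` and `κₙ(-∞, -x)` converge to those of the stable Lévy measure `ν^α`, and the claim
is `∫ G dκₙ → ∫ G dν^α`. Since `G` vanishes on `[-δ, δ]`, it suffices to treat each half-line
`(δ, ∞)`, where `ν^α` is finite. There convergence of tails is convergence of distribution
functions, and a Riemann–Stieltjes argument upgrades it to convergence of integrals: `G` is
uniformly close on `(δ, M]` to a step function, whose integral only involves tails, and the
contribution of `(M, ∞)` is small uniformly in `n` because the limiting tail at `M` is small.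
-/

lemma measureReal_Ioc_eq_sub {ρ : Measure ℝ} {x y : ℝ} (hxy : x ≤ y) (hx : ρ (Ioi x) ≠ ⊤) :
    ρ.real (Ioc x y) = ρ.real (Ioi x) - ρ.real (Ioi y) := by
  rw [← Ioi_sdiff_Ioi, measureReal_sdiff (Ioi_subset_Ioi hxy) measurableSet_Ioi hx]

lemma tendsto_measureReal_Ioc_of_tendsto_measureReal_Ioi {μ : ℕ → Measure ℝ} {μ₀ : Measure ℝ}
    {x y : ℝ} (hxy : x ≤ y) (hμ : ∀ n, μ n (Ioi x) ≠ ⊤) (hμ₀ : μ₀ (Ioi x) ≠ ⊤)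
    (hx : Tendsto (fun n => (μ n).real (Ioi x)) atTop (𝓝 (μ₀.real (Ioi x))))
    (hy : Tendsto (fun n => (μ n).real (Ioi y)) atTop (𝓝 (μ₀.real (Ioi y)))) :
    Tendsto (fun n => (μ n).real (Ioc x y)) atTop (𝓝 (μ₀.real (Ioc x y))) := by
  simp only [measureReal_Ioc_eq_sub hxy (hμ _), measureReal_Ioc_eq_sub hxy hμ₀]
  exact hx.sub hy

lemma tendsto_measureReal_Ioi_atTop {μ : Measure ℝ} {δ : ℝ} (hμ : μ (Ioi δ) ≠ ⊤) :
    Tendsto (fun x => μ.real (Ioi x)) atTop (𝓝 0) := by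
  have h_empty : ⋂ x : ℝ, Ioi x = ∅ :=
    eq_empty_of_forall_notMem fun z hz => lt_irrefl z (mem_iInter.1 hz z)
  have h := tendsto_measure_iInter_atTop (μ := μ) (s := Ioi)
    (fun _ => measurableSet_Ioi.nullMeasurableSet) (fun _ _ h => Ioi_subset_Ioi h) ⟨δ, hμ⟩
  rw [h_empty, measure_empty] at h
  exact (ENNReal.tendsto_toReal ENNReal.zero_ne_top).comp h

lemma exists_partition_abs_sub_le {H : ℝ → ℝ} {a b ε : ℝ} (hab : a ≤ b)
    (hH : ContinuousOn H (Icc a b)) (hε : 0 < ε) :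
    ∃ (K : ℕ) (c : ℕ → ℝ), Monotone c ∧ c 0 = a ∧ c K = b ∧
      ∀ j < K, ∀ z ∈ Ioc (c j) (c (j + 1)), |H z - H (c (j + 1))| ≤ ε := by
  obtain ⟨η, hη, hHη⟩ := Metric.uniformContinuousOn_iff.1
    (isCompact_Icc.uniformContinuousOn_of_continuous hH) ε hε
  set K : ℕ := ⌈(b - a) / η⌉₊ + 1
  have hK : (0 : ℝ) < K := by positivity
  have hmesh : (b - a) / K < η := by
    rw [div_lt_iff₀ hK, ← div_lt_iff₀' hη]
    exact (Nat.le_ceil _).trans_lt (by simp [K])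
  set c : ℕ → ℝ := fun j => a + j * ((b - a) / K)
  have hmono : Monotone c := fun i j hij => by
    have : 0 ≤ (b - a) / K := div_nonneg (sub_nonneg.2 hab) hK.le
    simp only [c]; gcongr
  have hcK : c K = b := by simp only [c]; field_simp; ring
  have hc_mem : ∀ j ≤ K, c j ∈ Icc a b := fun j hj =>
    ⟨by simpa [c] using hmono (Nat.zero_le j), hcK ▸ hmono hj⟩
  refine ⟨K, c, hmono, by simp [c], hcK, fun j hj z hz => ?_⟩
  have hz_mem : z ∈ Icc a b := ⟨(hc_mem j hj.le).1.trans hz.1.le, hz.2.trans (hc_mem _ hj).2⟩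
  have hdist : dist z (c (j + 1)) < η := by
    rw [Real.dist_eq, abs_sub_comm, abs_of_nonneg (sub_nonneg.2 hz.2)]
    have : c (j + 1) - c j = (b - a) / K := by simp only [c]; push_cast; ring
    linarith [hz.1]
  exact (hHη z hz_mem _ (hc_mem _ hj) hdist).le

noncomputable def stieltjesSum (ρ : Measure ℝ) (H : ℝ → ℝ) (c : ℕ → ℝ) (K : ℕ) : ℝ :=
  ∑ j ∈ Finset.range K, H (c (j + 1)) * ρ.real (Ioc (c j) (c (j + 1)))

section StieltjesSum

variable {ρ : Measure ℝ} {H : ℝ → ℝ} {c : ℕ → ℝ} {K : ℕ} {ε : ℝ}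

open Finset in
lemma abs_setIntegral_Ioc_sub_stieltjesSum_le (hc : Monotone c) (hρ : ρ (Ioi (c 0)) ≠ ⊤)
    (hH : IntegrableOn H (Ioi (c 0)) ρ)
    (hosc : ∀ j < K, ∀ z ∈ Ioc (c j) (c (j + 1)), |H z - H (c (j + 1))| ≤ ε) :
    |∫ z in Ioc (c 0) (c K), H z ∂ρ - stieltjesSum ρ H c K| ≤ ε * ρ.real (Ioc (c 0) (c K)) := by
  have hρ_tail : ∀ j, ρ (Ioi (c j)) ≠ ⊤ := fun j =>
    measure_ne_top_of_subset (Ioi_subset_Ioi (hc (Nat.zero_le j))) hρ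
  have hH_piece : ∀ j, IntegrableOn H (Ioc (c j) (c (j + 1))) ρ := fun j =>
    hH.mono_set (Set.Ioc_subset_Ioi_self.trans (Ioi_subset_Ioi (hc (Nat.zero_le j))))
  have h_integral : ∫ z in Ioc (c 0) (c K), H z ∂ρ
      = ∑ j ∈ range K, ∫ z in Ioc (c j) (c (j + 1)), H z ∂ρ := by
    rw [← intervalIntegral.integral_of_le (hc (Nat.zero_le K)),
      ← intervalIntegral.sum_integral_adjacent_intervals fun j _ =>
        (intervalIntegrable_iff_integrableOn_Ioc_of_le (hc j.le_succ)).2 (hH_piece j)]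
    exact sum_congr rfl fun j _ => intervalIntegral.integral_of_le (hc j.le_succ)
  have h_measure :
      ρ.real (Ioc (c 0) (c K)) = ∑ j ∈ range K, ρ.real (Ioc (c j) (c (j + 1))) := by
    simp only [measureReal_Ioc_eq_sub (hc (Nat.le_succ _)) (hρ_tail _),
      measureReal_Ioc_eq_sub (hc (Nat.zero_le K)) hρ]
    exact (sum_range_sub' (fun j => ρ.real (Ioi (c j))) K).symm
  have h_piece : ∀ j < K, |∫ z in Ioc (c j) (c (j + 1)), H z ∂ρ
      - H (c (j + 1)) * ρ.real (Ioc (c j) (c (j + 1)))| ≤ ε * ρ.real (Ioc (c j) (c (j + 1))) := by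
    intro j hj
    have hfin : ρ (Ioc (c j) (c (j + 1))) < ⊤ :=
      (measure_mono Set.Ioc_subset_Ioi_self).trans_lt (hρ_tail j).lt_top
    rw [mul_comm (H _), ← smul_eq_mul, ← setIntegral_const,
      ← integral_sub (hH_piece j) (integrableOn_const hfin.ne)]
    exact norm_setIntegral_le_of_norm_le_const (f := fun z => H z - H (c (j + 1))) hfin
      (hosc j hj)
  rw [stieltjesSum, h_integral, h_measure, mul_sum, ← sum_sub_distrib]
  exact (abs_sum_le_sum_abs _ _).trans (sum_le_sum fun j hj => h_piece j (mem_range.1 hj))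

lemma abs_setIntegral_Ioi_sub_stieltjesSum_le (hc : Monotone c) (hρ : ρ (Ioi (c 0)) ≠ ⊤)
    (hH : Measurable H) {C : ℝ} (hC : ∀ z, |H z| ≤ C)
    (hosc : ∀ j < K, ∀ z ∈ Ioc (c j) (c (j + 1)), |H z - H (c (j + 1))| ≤ ε) :
    |∫ z in Ioi (c 0), H z ∂ρ - stieltjesSum ρ H c K|
      ≤ ε * ρ.real (Ioc (c 0) (c K)) + C * ρ.real (Ioi (c K)) := by
  have hH_int : IntegrableOn H (Ioi (c 0)) ρ :=
    Measure.integrableOn_of_bounded hρ hH.aestronglyMeasurable (ae_of_all _ hC)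
  have h0K : c 0 ≤ c K := hc (Nat.zero_le K)
  have h_tail : |∫ z in Ioi (c K), H z ∂ρ| ≤ C * ρ.real (Ioi (c K)) :=
    norm_setIntegral_le_of_norm_le_const (f := H)
      (measure_ne_top_of_subset (Ioi_subset_Ioi h0K) hρ).lt_top fun z _ => hC z
  rw [← Ioc_union_Ioi_eq_Ioi h0K, setIntegral_union (Ioc_disjoint_Ioi le_rfl) measurableSet_Ioi
    (hH_int.mono_set Ioc_subset_Ioi_self) (hH_int.mono_set (Ioi_subset_Ioi h0K)),
    add_sub_right_comm]
  exact (abs_add_le _ _).trans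
    (add_le_add (abs_setIntegral_Ioc_sub_stieltjesSum_le hc hρ hH_int hosc) h_tail)

lemma abs_setIntegral_Ioi_sub_setIntegral_Ioi_le {ρ' : Measure ℝ} (hc : Monotone c)
    (hρ : ρ (Ioi (c 0)) ≠ ⊤) (hρ' : ρ' (Ioi (c 0)) ≠ ⊤) (hH : Measurable H) {C : ℝ}
    (hC : ∀ z, |H z| ≤ C)
    (hosc : ∀ j < K, ∀ z ∈ Ioc (c j) (c (j + 1)), |H z - H (c (j + 1))| ≤ ε) :
    |∫ z in Ioi (c 0), H z ∂ρ - ∫ z in Ioi (c 0), H z ∂ρ'|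
      ≤ ε * ρ.real (Ioc (c 0) (c K)) + C * ρ.real (Ioi (c K))
        + |stieltjesSum ρ H c K - stieltjesSum ρ' H c K|
        + (ε * ρ'.real (Ioc (c 0) (c K)) + C * ρ'.real (Ioi (c K))) := by
  have h₁ := abs_sub_le (∫ z in Ioi (c 0), H z ∂ρ) (stieltjesSum ρ H c K)
    (∫ z in Ioi (c 0), H z ∂ρ')
  have h₂ := abs_sub_le (stieltjesSum ρ H c K) (stieltjesSum ρ' H c K) (∫ z in Ioi (c 0), H z ∂ρ')
  rw [abs_sub_comm (stieltjesSum ρ' H c K)] at h₂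
  linarith [abs_setIntegral_Ioi_sub_stieltjesSum_le hc hρ hH hC hosc,
    abs_setIntegral_Ioi_sub_stieltjesSum_le hc hρ' hH hC hosc]

end StieltjesSum

theorem tendsto_setIntegral_Ioi_of_tendsto_measureReal_Ioi {μ : ℕ → Measure ℝ} {μ₀ : Measure ℝ}
    {δ : ℝ} (hμ : ∀ n, μ n (Ioi δ) ≠ ⊤) (hμ₀ : μ₀ (Ioi δ) ≠ ⊤)
    (htail : ∀ x, δ ≤ x → Tendsto (fun n => (μ n).real (Ioi x)) atTop (𝓝 (μ₀.real (Ioi x))))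
    {H : ℝ → ℝ} (hH : Continuous H) {C : ℝ} (hC : ∀ x, |H x| ≤ C) :
    Tendsto (fun n => ∫ z in Ioi δ, H z ∂μ n) atTop (𝓝 (∫ z in Ioi δ, H z ∂μ₀)) := by
  have hC0 : 0 ≤ C := (abs_nonneg _).trans (hC 0)
  have hfin : ∀ {ρ : Measure ℝ} {x}, ρ (Ioi δ) ≠ ⊤ → δ ≤ x → ρ (Ioi x) ≠ ⊤ := fun hρ hx =>
    measure_ne_top_of_subset (Ioi_subset_Ioi hx) hρ
  have hIoc : ∀ x y, δ ≤ x → x ≤ y →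
      Tendsto (fun n => (μ n).real (Ioc x y)) atTop (𝓝 (μ₀.real (Ioc x y))) :=
    fun x y hx hxy => tendsto_measureReal_Ioc_of_tendsto_measureReal_Ioi hxy
      (fun n => hfin (hμ n) hx) (hfin hμ₀ hx) (htail x hx) (htail y (hx.trans hxy))
  rw [Metric.tendsto_nhds]
  intro ε hε
  set R := μ₀.real (Ioi δ)
  set η := ε / (2 * (R + C + 1)) with hη_def
  have hRC : 0 < R + C + 1 := by linarith [measureReal_nonneg (μ := μ₀) (s := Ioi δ)]
  have hη : 0 < η := by positivity
  obtain ⟨M, hM, hδM⟩ : ∃ M, μ₀.real (Ioi M) ≤ η ∧ δ ≤ M :=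
    (((tendsto_measureReal_Ioi_atTop hμ₀).eventually (ge_mem_nhds hη)).and
      (eventually_ge_atTop δ)).exists
  obtain ⟨K, c, hc, rfl, rfl, hosc⟩ := exists_partition_abs_sub_le hδM hH.continuousOn hη
  set bound : Measure ℝ → ℝ := fun ρ => η * ρ.real (Ioc (c 0) (c K)) + C * ρ.real (Ioi (c K))
  have hS : Tendsto (fun n => stieltjesSum (μ n) H c K) atTop (𝓝 (stieltjesSum μ₀ H c K)) :=
    tendsto_finsetSum _ fun j _ => (hIoc _ _ (hc (Nat.zero_le j)) (hc j.le_succ)).const_mul _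
  have hbound : Tendsto (fun n => bound (μ n)) atTop (𝓝 (bound μ₀)) :=
    ((hIoc _ _ le_rfl hδM).const_mul η).add ((htail _ hδM).const_mul C)
  have hbound_lt : bound μ₀ < ε / 2 := calc
    bound μ₀ ≤ η * R + C * η := add_le_add
        (mul_le_mul_of_nonneg_left (measureReal_mono Ioc_subset_Ioi_self hμ₀) hη.le)
        (mul_le_mul_of_nonneg_left hM hC0)
    _ < η * (R + C + 1) := by linarith
    _ = ε / 2 := by rw [hη_def]; field_simp
  have hlim : Tendsto (fun n => bound (μ n) + |stieltjesSum (μ n) H c K - stieltjesSum μ₀ H c K|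
      + bound μ₀) atTop (𝓝 (bound μ₀ + 0 + bound μ₀)) := by
    simpa only [sub_self, abs_zero] using
      (hbound.add (hS.sub_const (stieltjesSum μ₀ H c K)).abs).add_const (bound μ₀)
  filter_upwards [hlim.eventually (gt_mem_nhds (show bound μ₀ + 0 + bound μ₀ < ε by linarith))]
    with n hn
  rw [Real.dist_eq]
  exact (abs_setIntegral_Ioi_sub_setIntegral_Ioi_le hc (hμ n) hμ₀ hH.measurable hC hosc).trans_lt hn

lemma setIntegral_Ioi_eq_of_forall_Ioc_eq_zero {ρ : Measure ℝ} {f : ℝ → ℝ} {a b : ℝ}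
    (hab : a ≤ b) (hf : ∀ x ∈ Ioc a b, f x = 0) : ∫ x in Ioi a, f x ∂ρ = ∫ x in Ioi b, f x ∂ρ :=
  setIntegral_eq_of_subset_of_forall_sdiff_eq_zero measurableSet_Ioi (Ioi_subset_Ioi hab)
    fun x hx => hf x (by rwa [Ioi_sdiff_Ioi] at hx)

lemma integral_eq_setIntegral_Ioi_add_setIntegral_Iio {ρ : Measure ℝ} {f : ℝ → ℝ}
    (hf : Integrable f ρ) (hf0 : f 0 = 0) :
    ∫ x, f x ∂ρ = ∫ x in Ioi 0, f x ∂ρ + ∫ x in Iio 0, f x ∂ρ := by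
  rw [← integral_add_compl measurableSet_Ioi hf, compl_Ioi,
    setIntegral_eq_of_subset_of_forall_sdiff_eq_zero measurableSet_Iic Iio_subset_Iic_self]
  intro x hx
  rw [Iic_sdiff_Iio, Icc_self, mem_singleton_iff] at hx
  rw [hx, hf0]

noncomputable def stableLevyMeasurePos (α a : ℝ) : Measure ℝ :=
  (volume.restrict (Ioi 0)).withDensity fun z => ENNReal.ofReal (a * z ^ (-α - 1))

section StableLevyMeasurePos

variable {α a : ℝ}

lemma stableLevyMeasurePos_restrict_Ioi {x : ℝ} (hx : 0 ≤ x) :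
    (stableLevyMeasurePos α a).restrict (Ioi x)
      = (volume.restrict (Ioi x)).withDensity fun z => ENNReal.ofReal (a * z ^ (-α - 1)) := by
  rw [stableLevyMeasurePos, restrict_withDensity measurableSet_Ioi, Measure.restrict_restrict
    measurableSet_Ioi, inter_eq_left.2 (Ioi_subset_Ioi hx)]

lemma integrableOn_Ioi_stableLevyDensity (hα : 0 < α) {x : ℝ} (hx : 0 < x) :
    IntegrableOn (fun z => a * z ^ (-α - 1)) (Ioi x) :=
  (integrableOn_Ioi_rpow_of_lt (by linarith) hx).const_mul a

lemma stableLevyMeasurePos_Ioi_ne_top (hα : 0 < α) {x : ℝ} (hx : 0 < x) :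
    stableLevyMeasurePos α a (Ioi x) ≠ ⊤ := by
  rw [← Measure.restrict_apply_univ, stableLevyMeasurePos_restrict_Ioi hx.le,
    withDensity_apply _ MeasurableSet.univ, Measure.restrict_univ]
  exact (integrableOn_Ioi_stableLevyDensity hα hx).lintegral_lt_top.ne

lemma stableLevyMeasurePos_real_Ioi (hα : 0 < α) (ha : 0 ≤ a) {x : ℝ} (hx : 0 < x) :
    (stableLevyMeasurePos α a).real (Ioi x) = a / α * x ^ (-α) := by
  have h_int : ∫ z in Ioi x, a * z ^ (-α - 1) = a / α * x ^ (-α) := by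
    rw [integral_const_mul, integral_Ioi_rpow_of_lt (by linarith) hx, sub_add_cancel]
    field_simp
  rw [measureReal_def, ← Measure.restrict_apply_univ, stableLevyMeasurePos_restrict_Ioi hx.le,
    withDensity_apply _ MeasurableSet.univ, Measure.restrict_univ,
    ← ofReal_integral_eq_lintegral_ofReal (integrableOn_Ioi_stableLevyDensity hα hx), h_int,
    ENNReal.toReal_ofReal (by positivity)]
  exact ae_restrict_of_forall_mem measurableSet_Ioi fun z hz =>
    mul_nonneg ha (Real.rpow_nonneg (hx.trans hz).le _)

lemma setIntegral_Ioi_stableLevyMeasurePos (ha : 0 ≤ a) {x : ℝ} (hx : 0 ≤ x) (f : ℝ → ℝ) :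
    ∫ z in Ioi x, f z ∂stableLevyMeasurePos α a = ∫ z in Ioi x, f z * (a * z ^ (-α - 1)) := by
  rw [stableLevyMeasurePos_restrict_Ioi hx, integral_withDensity_eq_integral_toReal_smul
    (by fun_prop) (ae_of_all _ fun _ => ENNReal.ofReal_lt_top)]
  refine setIntegral_congr_fun measurableSet_Ioi fun z hz => ?_
  rw [ENNReal.toReal_ofReal (mul_nonneg ha (Real.rpow_nonneg (hx.trans hz.le) _)), smul_eq_mul,
    mul_comm]

end StableLevyMeasurePos

section OneSided

variable {μ : ℕ → Measure ℝ} [∀ n, IsFiniteMeasure (μ n)] {α a δ C : ℝ} {H : ℝ → ℝ}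

theorem tendsto_setIntegral_Ioi_of_tendsto_measureReal_Ioi_rpow (hα : 0 < α) (ha : 0 ≤ a)
    (htail : ∀ x, 0 < x → Tendsto (fun n => (μ n).real (Ioi x)) atTop (𝓝 (a / α * x ^ (-α))))
    (hH : Continuous H) (hC : ∀ x, |H x| ≤ C) (hδ : 0 < δ) (hH0 : ∀ x ∈ Ioc 0 δ, H x = 0) :
    Tendsto (fun n => ∫ z in Ioi 0, H z ∂μ n) atTop
      (𝓝 (∫ z in Ioi 0, H z * (a * z ^ (-α - 1)))) := by
  have h := tendsto_setIntegral_Ioi_of_tendsto_measureReal_Ioi (μ₀ := stableLevyMeasurePos α a)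
    (fun n => measure_ne_top (μ n) _) (stableLevyMeasurePos_Ioi_ne_top hα hδ)
    (fun x hx => stableLevyMeasurePos_real_Ioi hα ha (hδ.trans_le hx) ▸ htail x (hδ.trans_le hx))
    hH hC
  rw [setIntegral_Ioi_stableLevyMeasurePos ha hδ.le] at h
  rw [setIntegral_Ioi_eq_of_forall_Ioc_eq_zero hδ.le fun x hx => by rw [hH0 x hx, zero_mul]]
  simpa only [setIntegral_Ioi_eq_of_forall_Ioc_eq_zero hδ.le hH0] using h

theorem tendsto_setIntegral_Iio_of_tendsto_measureReal_Iio_rpow (hα : 0 < α) (ha : 0 ≤ a)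
    (htail : ∀ x, 0 < x →
      Tendsto (fun n => (μ n).real (Iio (-x))) atTop (𝓝 (a / α * x ^ (-α))))
    (hH : Continuous H) (hC : ∀ x, |H x| ≤ C) (hδ : 0 < δ) (hH0 : ∀ x ∈ Ico (-δ) 0, H x = 0) :
    Tendsto (fun n => ∫ z in Iio 0, H z ∂μ n) atTop
      (𝓝 (∫ z in Iio 0, H z * (a * |z| ^ (-α - 1)))) := by
  have h := tendsto_setIntegral_Ioi_of_tendsto_measureReal_Ioi_rpow
    (μ := fun n => (μ n).map Neg.neg) hα ha
    (fun x hx => by simpa only [map_measureReal_apply measurable_neg measurableSet_Ioi,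
      Set.neg_preimage, neg_Ioi] using htail x hx)
    (hH.comp continuous_neg) (fun x => hC (-x)) hδ
    (fun x hx => hH0 (-x) ⟨neg_le_neg hx.2, neg_lt_zero.2 hx.1⟩)
  have h_reflect : ∀ f : ℝ → ℝ, ∫ z in Ioi 0, f (-z) = ∫ z in Iio 0, f z := fun f => by
    rw [integral_comp_neg_Ioi, neg_zero, integral_Iic_eq_integral_Iio]
  simp only [measurableEmbedding_neg.setIntegral_map, Set.neg_preimage, neg_Ioi, neg_zero,
    Function.comp_apply, neg_neg] at h
  convert h using 2
  rw [← h_reflect]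
  refine setIntegral_congr_fun measurableSet_Ioi fun z (hz : 0 < z) => ?_
  rw [abs_neg, abs_of_pos hz]

end OneSided

noncomputable def scaledMeasure (ν : Measure ℝ) (α : ℝ) (n : ℕ) : Measure ℝ :=
  (n : ℝ≥0) • ν.map fun u => u * (n : ℝ) ^ (-(1 / α))

section ScaledMeasure

variable (ν : Measure ℝ) (α : ℝ) (n : ℕ)

instance [IsFiniteMeasure ν] : IsFiniteMeasure (scaledMeasure ν α n) := by
  unfold scaledMeasure; infer_instance

lemma scaledMeasure_real_apply {s : Set ℝ} (hs : MeasurableSet s) :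
    (scaledMeasure ν α n).real s = n * ν.real ((fun u => u * (n : ℝ) ^ (-(1 / α))) ⁻¹' s) := by
  rw [scaledMeasure, measureReal_nnreal_smul_apply, map_measureReal_apply (by fun_prop) hs]
  rfl

lemma scaledMeasure_real_Ioi (x : ℝ) :
    (scaledMeasure ν α n).real (Ioi x) = n * ν.real (Ioi ((n : ℝ) ^ (1 / α) * x)) := by
  rcases n.eq_zero_or_pos with rfl | hn
  · simp [scaledMeasure]
  have hpow : 0 < (n : ℝ) ^ (1 / α) := by positivity
  rw [scaledMeasure_real_apply _ _ _ measurableSet_Ioi]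
  congr 2
  ext u
  simp only [mem_preimage, mem_Ioi, Real.rpow_neg (Nat.cast_nonneg n), ← div_eq_mul_inv,
    lt_div_iff₀ hpow, mul_comm x]

lemma scaledMeasure_real_Iio (x : ℝ) :
    (scaledMeasure ν α n).real (Iio (-x)) = n * ν.real (Iio (-((n : ℝ) ^ (1 / α) * x))) := by
  rcases n.eq_zero_or_pos with rfl | hn
  · simp [scaledMeasure]
  have hpow : 0 < (n : ℝ) ^ (1 / α) := by positivity
  rw [scaledMeasure_real_apply _ _ _ measurableSet_Iio]
  congr 2
  ext u
  simp only [mem_preimage, mem_Iio, Real.rpow_neg (Nat.cast_nonneg n), ← div_eq_mul_inv,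
    div_lt_iff₀ hpow, neg_mul, mul_comm x]

lemma integral_scaledMeasure {f : ℝ → ℝ} (hf : Measurable f) :
    ∫ z, f z ∂scaledMeasure ν α n = n * ∫ u, f (u * (n : ℝ) ^ (-(1 / α))) ∂ν := by
  rw [scaledMeasure, integral_smul_nnreal_measure, integral_map (by fun_prop)
    hf.aestronglyMeasurable]
  rfl

end ScaledMeasure

/-- Let `α ∈ (0,2)`, `a₊, a₋ ≥ 0`, and let `ν` be a probability measure on `ℝ`
satisfying the stable tail condition of index `α`: for every `x > 0`,
`n ν((n^{1/α} x, ∞)) → (a₊/α) x^{-α}` and `n ν((-∞, -n^{1/α} x)) → (a₋/α) x^{-α}`.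
Then for every bounded continuous `G : ℝ → ℝ` vanishing on a neighborhood of `0`,
`n ∫ G(u n^{-1/α}) ν(du) → ∫_{(0,∞)} G(z) a₊ z^{-α-1} dz + ∫_{(-∞,0)} G(z) a₋ |z|^{-α-1} dz`. -/
theorem stmt3 (α : ℝ) (hα : α ∈ Set.Ioo (0:ℝ) 2) (apos aneg : ℝ)
    (hapos : 0 ≤ apos) (haneg : 0 ≤ aneg)
    (ν : Measure ℝ) [IsProbabilityMeasure ν]
    (htail_pos : ∀ x : ℝ, 0 < x →
      Tendsto (fun n : ℕ => (n : ℝ) * (ν (Ioi ((n : ℝ) ^ (1 / α) * x))).toReal)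
        atTop (nhds (apos / α * x ^ (-α))))
    (htail_neg : ∀ x : ℝ, 0 < x →
      Tendsto (fun n : ℕ => (n : ℝ) * (ν (Iio (-((n : ℝ) ^ (1 / α) * x)))).toReal)
        atTop (nhds (aneg / α * x ^ (-α))))
    (G : ℝ → ℝ) (hGcont : Continuous G) (hGbdd : ∃ C : ℝ, ∀ x, |G x| ≤ C)
    (hG0 : ∀ᶠ x in nhds (0:ℝ), G x = 0) :
    Tendsto (fun n : ℕ => (n : ℝ) * ∫ u, G (u * (n : ℝ) ^ (-(1 / α))) ∂ν) atTop
      (nhds ((∫ z in Ioi (0:ℝ), G z * (apos * z ^ (-α - 1))) +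
        ∫ z in Iio (0:ℝ), G z * (aneg * |z| ^ (-α - 1)))) := by
  obtain ⟨C, hC⟩ := hGbdd
  obtain ⟨δ, hδ, hGδ⟩ := Metric.nhds_basis_closedBall.eventually_iff.1 hG0
  have hG_small : ∀ x, |x| ≤ δ → G x = 0 := fun x hx =>
    hGδ (by rwa [Metric.mem_closedBall, dist_zero_right, Real.norm_eq_abs])
  have hpos := tendsto_setIntegral_Ioi_of_tendsto_measureReal_Ioi_rpow (μ := scaledMeasure ν α)
    hα.1 hapos (fun x hx => (htail_pos x hx).congr fun n => (scaledMeasure_real_Ioi ν α n x).symm)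
    hGcont hC hδ fun x hx => hG_small x (abs_le.2 ⟨by linarith [hx.1], hx.2⟩)
  have hneg := tendsto_setIntegral_Iio_of_tendsto_measureReal_Iio_rpow (μ := scaledMeasure ν α)
    hα.1 haneg (fun x hx => (htail_neg x hx).congr fun n => (scaledMeasure_real_Iio ν α n x).symm)
    hGcont hC hδ fun x hx => hG_small x (abs_le.2 ⟨hx.1, by linarith [hx.2]⟩)
  refine (hpos.add hneg).congr fun n => ?_
  rw [← integral_scaledMeasure ν α n hGcont.measurable]
  exact (integral_eq_setIntegral_Ioi_add_setIntegral_Iio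
    (.of_bound hGcont.aestronglyMeasurable C (ae_of_all _ hC))
    (hG_small 0 (by simpa using hδ.le))).symm
end

section
/- Let S be a separable metrizable space. For each N ≥ 1, let X^{N,1}, …, X^{N,N} be an exchangeable family of S-valued random variables on a probability space (Ω_N, P_N), and let μ^N := (1/N) ∑_{i=1}^N δ_{X^{N,i}} be the associated empirical measure, viewed as a random element of the space of Borel probability measures on S equipped with the topology of weak convergence. Let μ be a random Borel probability measure on S defined on a probability space (Ω, P), and assume that μ^N converges to μ in distribution, i.e. for every bounded continuous F on the space of probability measures on S, E[F(μ^N)] → E[F(μ)] as N → ∞. Then for every m ≥ 1, every bounded continuous g on the space of probability measures on S, and all bounded continuous g_1, …, g_m : S → ℝ, lim_{N→∞} E[ g(μ^N) ∏_{i=1}^m g_i(X^{N,i}) ] = E[ g(μ) ∏_{i=1}^m ∫_S g_i dμ ]. -/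
/-!
Expanding the product, `∏ j, ∫ g_j dμ^N = N^{-m} ∑_{f : [m] → [N]} ∏ j, g_j (X^{f j})`.
Since `μ^N` is invariant under permutations of the sample, exchangeability gives every injective
`f` the same mixed moment `E[g(μ^N) ∏ j, g_j (X^{f j})]`, namely the one on the left-hand side,
while the non-injective maps form a fraction `1 - N(N-1)⋯(N-m+1)/N^m → 0` of all maps. So the
left-hand side is asymptotic to `E[F(μ^N)]` with `F π = g π * ∏ j, ∫ g_j dπ`, which is bounded and
continuous, and the convergence in distribution of `μ^N` concludes.
-/

open MeasureTheory Filter Topology Set Finset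
open scoped ENNReal BoundedContinuousFunction

lemma abs_sub_inv_card_mul_sum_le {α : Type*} [Fintype α] [Nonempty α] (p : α → Prop)
    [DecidablePred p] {H : α → ℝ} {a C : ℝ} (hpa : ∀ i, p i → H i = a) (ha : |a| ≤ C)
    (hH : ∀ i, |H i| ≤ C) :
    |a - (Fintype.card α : ℝ)⁻¹ * ∑ i, H i| ≤ 2 * C * (#{i | ¬p i} / Fintype.card α) := by
  have hsum : a - (Fintype.card α : ℝ)⁻¹ * ∑ i, H i =
      (Fintype.card α : ℝ)⁻¹ * ∑ i with ¬p i, (a - H i) := by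
    rw [sum_filter_of_ne (f := fun i => a - H i) (p := fun i => ¬p i)
      fun i _ hi hpi => hi (by rw [hpa i hpi, sub_self]), sum_sub_distrib,
      sum_const, card_univ, nsmul_eq_mul]
    field_simp
  rw [hsum, abs_mul, abs_inv, Nat.abs_cast, inv_mul_eq_div, div_le_iff₀ (by positivity)]
  calc |∑ i with ¬p i, (a - H i)| ≤ ∑ i with ¬p i, 2 * C :=
        (abs_sum_le_sum_abs _ _).trans <| sum_le_sum fun i _ =>
          (abs_sub _ _).trans (by linarith [hH i])
    _ = 2 * C * (#{i | ¬p i} / Fintype.card α) * Fintype.card α := by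
        rw [sum_const, nsmul_eq_mul]
        field_simp

lemma tendsto_card_not_injective_div_card (m : ℕ) :
    Tendsto (fun N : ℕ => (#{f : Fin m → Fin N | ¬Function.Injective f} : ℝ) /
      Fintype.card (Fin m → Fin N)) atTop (𝓝 0) := by
  have hinj (N : ℕ) : #{f : Fin m → Fin N | Function.Injective f} = N.descFactorial m := by
    rw [← Fintype.card_subtype, Fintype.card_congr (Equiv.subtypeInjectiveEquivEmbedding _ _),
      Fintype.card_embedding_eq, Fintype.card_fin, Fintype.card_fin]
  have hratio (N : ℕ) (hN : 0 < N) :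
      (#{f : Fin m → Fin N | ¬Function.Injective f} : ℝ) / Fintype.card (Fin m → Fin N) =
        1 - (N.descFactorial m : ℝ) / (N : ℝ) ^ m := by
    have hsplit : (N.descFactorial m : ℝ) + #{f : Fin m → Fin N | ¬Function.Injective f} =
        (N : ℝ) ^ m := by
      rw [← hinj]
      exact_mod_cast (card_filter_add_card_filter_not (s := univ) _).trans (by simp)
    rw [eq_sub_of_add_eq' hsplit, Fintype.card_fun, Fintype.card_fin, Fintype.card_fin,
      Nat.cast_pow]
    field_simp
  have hdesc : Tendsto (fun N : ℕ => (N.descFactorial m : ℝ) / (N : ℝ) ^ m) atTop (𝓝 1) :=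
    (Asymptotics.isEquivalent_iff_tendsto_one
      (eventually_atTop.mpr ⟨1, fun N hN => by positivity⟩)).mp
      (isEquivalent_descFactorial m)
  simpa using (tendsto_const_nhds.sub hdesc).congr'
    ((eventually_gt_atTop 0).mono fun N hN => (hratio N hN).symm)

namespace MeasureTheory

variable {ι S : Type*} [MeasurableSpace S]

noncomputable def empiricalMeasure [Fintype ι] [Nonempty ι] (x : ι → S) : ProbabilityMeasure S :=
  ⟨(Fintype.card ι : ℝ≥0∞)⁻¹ • ∑ i, Measure.dirac (x i), ⟨by
    simp [ENNReal.inv_mul_cancel (Nat.cast_ne_zero.mpr Fintype.card_ne_zero)]⟩⟩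

section empiricalMeasure

variable [Fintype ι] [Nonempty ι]

lemma empiricalMeasure_comp_perm (x : ι → S) (σ : Equiv.Perm ι) :
    empiricalMeasure (x ∘ σ) = empiricalMeasure x :=
  Subtype.ext <| congrArg (_ • ·) (Equiv.sum_comp σ fun i => Measure.dirac (x i))

lemma integral_empiricalMeasure (x : ι → S) {f : S → ℝ} (hf : StronglyMeasurable f) :
    ∫ s, f s ∂(empiricalMeasure x : Measure S) = (Fintype.card ι : ℝ)⁻¹ * ∑ i, f (x i) := by
  change ∫ s, f s ∂((Fintype.card ι : ℝ≥0∞)⁻¹ • ∑ i, Measure.dirac (x i)) = _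
  rw [integral_smul_measure, integral_finsetSum_measure fun i _ => integrable_dirac' hf (by simp)]
  simp [integral_dirac' f _ hf, ENNReal.toReal_inv]

lemma continuous_empiricalMeasure [TopologicalSpace S] [OpensMeasurableSpace S] :
    Continuous (empiricalMeasure : (ι → S) → ProbabilityMeasure S) := by
  refine ProbabilityMeasure.continuous_iff_forall_continuous_integral.mpr fun f => ?_
  simp_rw [integral_empiricalMeasure _ f.continuous.stronglyMeasurable]
  fun_prop

lemma coe_empiricalMeasure_fin {N : ℕ} [NeZero N] (x : ℕ → S) :
    (empiricalMeasure (fun i : Fin N => x i) : Measure S) =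
      (N : ℝ≥0∞)⁻¹ • ∑ i ∈ range N, Measure.dirac (x i) := by
  rw [← Fin.sum_univ_eq_sum_range (fun i => Measure.dirac (x i))]
  simp [empiricalMeasure]

end empiricalMeasure

def IsExchangeable (ν : Measure (ι → S)) : Prop :=
  ∀ σ : Equiv.Perm ι, ν.map (fun x => x ∘ σ) = ν

lemma IsExchangeable.integral_comp_perm {E : Type*} [NormedAddCommGroup E] [NormedSpace ℝ E]
    {ν : Measure (ι → S)} (hν : IsExchangeable ν) (σ : Equiv.Perm ι) (G : (ι → S) → E) :
    ∫ x, G (x ∘ σ) ∂ν = ∫ x, G x ∂ν := by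
  conv_rhs => rw [← hν σ]
  exact (integral_map_equiv (MeasurableEquiv.arrowCongr' σ.symm (.refl S)) G).symm


lemma isExchangeable_map {Ω : Type*} [MeasurableSpace Ω] {P : Measure Ω} {Y : Ω → ι → S}
    (hY : Measurable Y) (h : ∀ σ : Equiv.Perm ι, P.map (fun ω => Y ω ∘ σ) = P.map Y) :
    IsExchangeable (P.map Y) := fun σ =>
  (Measure.map_map (measurable_pi_lambda _ fun i => measurable_pi_apply (σ i)) hY).trans (h σ)

section MixedMoments

variable {κ : Type*} [Fintype κ] [Fintype ι] [Nonempty ι]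

lemma IsExchangeable.integral_mul_prod_of_injective {ν : Measure (ι → S)} (hν : IsExchangeable ν)
    (g : ProbabilityMeasure S → ℝ) (φ : κ → S → ℝ) {e f : κ → ι} (he : Function.Injective e)
    (hf : Function.Injective f) :
    ∫ x, g (empiricalMeasure x) * ∏ j, φ j (x (f j)) ∂ν =
      ∫ x, g (empiricalMeasure x) * ∏ j, φ j (x (e j)) ∂ν := by
  obtain ⟨σ, hσ⟩ := Equiv.Perm.exists_extending_pair e f he hf
  rw [← hν.integral_comp_perm σ fun x => g (empiricalMeasure x) * ∏ j, φ j (x (e j))]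
  simp only [Function.comp_apply, empiricalMeasure_comp_perm, hσ]

variable [TopologicalSpace S] [OpensMeasurableSpace S]

lemma norm_apply_mul_prod_apply_le (g : ProbabilityMeasure S →ᵇ ℝ) (φ : κ → S →ᵇ ℝ)
    (π : ProbabilityMeasure S) (y : κ → S) : ‖g π * ∏ j, φ j (y j)‖ ≤ ‖g‖ * ∏ j, ‖φ j‖ := by
  rw [norm_mul, norm_prod]
  gcongr with j
  · exact g.norm_coe_le_norm π
  · exact (φ j).norm_coe_le_norm (y j)

lemma continuous_mul_prod_integral (g : ProbabilityMeasure S →ᵇ ℝ) (φ : κ → S →ᵇ ℝ) :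
    Continuous fun π : ProbabilityMeasure S => g π * ∏ j, ∫ s, φ j s ∂(π : Measure S) :=
  g.continuous.mul (continuous_finsetProd _ fun j _ =>
    ProbabilityMeasure.continuous_integral_boundedContinuousFunction (φ j))

lemma abs_mul_prod_integral_le (g : ProbabilityMeasure S →ᵇ ℝ) (φ : κ → S →ᵇ ℝ)
    (π : ProbabilityMeasure S) : |g π * ∏ j, ∫ s, φ j s ∂(π : Measure S)| ≤ ‖g‖ * ∏ j, ‖φ j‖ := by
  rw [← Real.norm_eq_abs, norm_mul, norm_prod]
  gcongr with j
  · exact g.norm_coe_le_norm π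
  · exact (φ j).norm_integral_le_norm (μ := (π : Measure S))

lemma abs_integral_mul_prod_le (ν : Measure (ι → S)) [IsProbabilityMeasure ν]
    (g : ProbabilityMeasure S →ᵇ ℝ) (φ : κ → S →ᵇ ℝ) (f : κ → ι) :
    |∫ x, g (empiricalMeasure x) * ∏ j, φ j (x (f j)) ∂ν| ≤ ‖g‖ * ∏ j, ‖φ j‖ := by
  simpa using norm_integral_le_of_norm_le_const (μ := ν)
    (.of_forall fun x => norm_apply_mul_prod_apply_le g φ _ (x ∘ f))

variable [SecondCountableTopology S]

lemma integrable_mul_prod (ν : Measure (ι → S)) [IsFiniteMeasure ν]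
    (g : ProbabilityMeasure S →ᵇ ℝ) (φ : κ → S →ᵇ ℝ) (f : κ → ι) :
    Integrable (fun x => g (empiricalMeasure x) * ∏ j, φ j (x (f j))) ν := by
  refine .of_bound (Continuous.aestronglyMeasurable ?_) _
    (.of_forall fun x => norm_apply_mul_prod_apply_le g φ _ (x ∘ f))
  exact (g.continuous.comp continuous_empiricalMeasure).mul
    (continuous_finsetProd _ fun j _ => (φ j).continuous.comp (continuous_apply (f j)))

lemma integral_mul_prod_integral_empiricalMeasure [DecidableEq κ] (ν : Measure (ι → S))
    [IsFiniteMeasure ν] (g : ProbabilityMeasure S →ᵇ ℝ) (φ : κ → S →ᵇ ℝ) :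
    ∫ x, g (empiricalMeasure x) * ∏ j, ∫ s, φ j s ∂(empiricalMeasure x : Measure S) ∂ν =
      (Fintype.card (κ → ι) : ℝ)⁻¹ *
        ∑ f : κ → ι, ∫ x, g (empiricalMeasure x) * ∏ j, φ j (x (f j)) ∂ν := by
  have hexpand : ∀ x : ι → S,
      g (empiricalMeasure x) * ∏ j, ∫ s, φ j s ∂(empiricalMeasure x : Measure S) =
        (Fintype.card (κ → ι) : ℝ)⁻¹ *
          ∑ f : κ → ι, g (empiricalMeasure x) * ∏ j, φ j (x (f j)) := by
    intro x
    simp_rw [integral_empiricalMeasure x (φ _).continuous.stronglyMeasurable, prod_mul_distrib,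
      prod_const, Fintype.prod_sum, ← mul_sum, Fintype.card_fun, card_univ]
    push_cast
    rw [inv_pow]
    ring
  simp_rw [hexpand, integral_const_mul,
    integral_finsetSum _ fun f _ => integrable_mul_prod ν g φ f]

lemma IsExchangeable.abs_integral_mul_prod_sub_le [DecidableEq κ] [DecidableEq ι]
    {ν : Measure (ι → S)} [IsProbabilityMeasure ν] (hν : IsExchangeable ν)
    (g : ProbabilityMeasure S →ᵇ ℝ) (φ : κ → S →ᵇ ℝ) {e : κ → ι} (he : Function.Injective e) :
    |∫ x, g (empiricalMeasure x) * ∏ j, φ j (x (e j)) ∂ν -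
        ∫ x, g (empiricalMeasure x) * ∏ j, ∫ s, φ j s ∂(empiricalMeasure x : Measure S) ∂ν| ≤
      2 * (‖g‖ * ∏ j, ‖φ j‖) *
        (#{f : κ → ι | ¬Function.Injective f} / Fintype.card (κ → ι)) := by
  rw [integral_mul_prod_integral_empiricalMeasure]
  exact abs_sub_inv_card_mul_sum_le _
    (fun f hf => hν.integral_mul_prod_of_injective g (fun j => φ j) he hf)
    (abs_integral_mul_prod_le ν g φ e) (abs_integral_mul_prod_le ν g φ)

lemma IsExchangeable.abs_integral_comp_mul_prod_sub_le [DecidableEq κ] [DecidableEq ι]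
    {Ω : Type*} [MeasurableSpace Ω] {P : Measure Ω} [IsProbabilityMeasure P] {Y : Ω → ι → S}
    (hY : Measurable Y) (hexch : IsExchangeable (P.map Y))
    (g : ProbabilityMeasure S →ᵇ ℝ) (φ : κ → S →ᵇ ℝ) {e : κ → ι} (he : Function.Injective e) :
    |∫ ω, g (empiricalMeasure (Y ω)) * ∏ j, φ j (Y ω (e j)) ∂P -
        ∫ ω, g (empiricalMeasure (Y ω)) *
          ∏ j, ∫ s, φ j s ∂(empiricalMeasure (Y ω) : Measure S) ∂P| ≤
      2 * (‖g‖ * ∏ j, ‖φ j‖) *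
        (#{f : κ → ι | ¬Function.Injective f} / Fintype.card (κ → ι)) := by
  have := Measure.isProbabilityMeasure_map (μ := P) hY.aemeasurable
  rw [← integral_map hY.aemeasurable (integrable_mul_prod _ g φ e).aestronglyMeasurable,
    ← integral_map hY.aemeasurable
      ((continuous_mul_prod_integral g φ).comp' continuous_empiricalMeasure).aestronglyMeasurable]
  exact hexch.abs_integral_mul_prod_sub_le g φ he

end MixedMoments

end MeasureTheory

theorem stmt8_general {S : Type*} [MeasurableSpace S] [TopologicalSpace S] [BorelSpace S]
    [TopologicalSpace.SeparableSpace S] [TopologicalSpace.PseudoMetrizableSpace S]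
    (ΩN : ℕ → Type*) [∀ N, MeasurableSpace (ΩN N)]
    (P : ∀ N, Measure (ΩN N)) [∀ N, IsProbabilityMeasure (P N)]
    (X : ∀ N : ℕ, ℕ → ΩN N → S)
    (hXmeas : ∀ N, ∀ i < N, Measurable (X N i))
    (hexch : ∀ N (σ : Equiv.Perm (Fin N)),
      Measure.map (fun ω (i : Fin N) => X N (σ i : ℕ) ω) (P N) =
        Measure.map (fun ω (i : Fin N) => X N (i : ℕ) ω) (P N))
    (μN : ∀ N : ℕ, ΩN N → ProbabilityMeasure S)
    (hμN : ∀ N : ℕ, 0 < N → ∀ ω, (μN N ω : Measure S) =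
      (N : ℝ≥0∞)⁻¹ • ∑ i ∈ Finset.range N, Measure.dirac (X N i ω))
    {Ω' : Type*} [MeasurableSpace Ω'] (P' : Measure Ω') [IsProbabilityMeasure P']
    (μ : Ω' → ProbabilityMeasure S)
    (hconv : ∀ F : ProbabilityMeasure S → ℝ, Continuous F → (∃ C : ℝ, ∀ π, |F π| ≤ C) →
      Tendsto (fun N => ∫ ω, F (μN N ω) ∂(P N)) atTop (nhds (∫ ω', F (μ ω') ∂P')))
    (m : ℕ)
    (g : ProbabilityMeasure S → ℝ) (hgcont : Continuous g) (hgbdd : ∃ C : ℝ, ∀ π, |g π| ≤ C)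
    (gi : ℕ → S → ℝ) (hgicont : ∀ i < m, Continuous (gi i))
    (hgibdd : ∀ i < m, ∃ C : ℝ, ∀ x, |gi i x| ≤ C) :
    Tendsto
      (fun N => ∫ ω, g (μN N ω) * ∏ i ∈ Finset.range m, gi i (X N i ω) ∂(P N)) atTop
      (nhds (∫ ω', g (μ ω') *
        ∏ i ∈ Finset.range m, ∫ x, gi i x ∂(μ ω' : Measure S) ∂P')) := by
  have : SecondCountableTopology S := by
    let := TopologicalSpace.pseudoMetrizableSpacePseudoMetric S
    exact UniformSpace.secondCountable_of_separable S
  obtain ⟨Cg, hCg⟩ := hgbdd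
  choose Ci hCi using hgibdd
  let G : ProbabilityMeasure S →ᵇ ℝ := .ofNormedAddCommGroup g hgcont Cg hCg
  let φ (j : Fin m) : S →ᵇ ℝ := .ofNormedAddCommGroup (gi j) (hgicont j j.2) (Ci j j.2) (hCi j j.2)
  have hestimate : ∀ᶠ N in atTop,
      ‖∫ ω, g (μN N ω) * ∏ i ∈ range m, gi i (X N i ω) ∂(P N) -
          ∫ ω, G (μN N ω) * ∏ j, ∫ s, φ j s ∂(μN N ω : Measure S) ∂(P N)‖ ≤
        2 * (‖G‖ * ∏ j, ‖φ j‖) *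
          (#{f : Fin m → Fin N | ¬Function.Injective f} / Fintype.card (Fin m → Fin N)) := by
    filter_upwards [eventually_ge_atTop (max m 1)] with N hN
    have : NeZero N := ⟨by omega⟩
    have hY : Measurable fun ω (i : Fin N) => X N i ω :=
      measurable_pi_lambda _ fun i => hXmeas N i i.2
    have hμ (ω : ΩN N) : μN N ω = empiricalMeasure fun i : Fin N => X N i ω :=
      Subtype.ext ((hμN N (NeZero.pos N) ω).trans (coe_empiricalMeasure_fin _).symm)
    simpa [hμ, φ, G, prod_range] using
      (isExchangeable_map hY (hexch N)).abs_integral_comp_mul_prod_sub_le hY G φ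
        (Fin.castLE_injective (le_of_max_le_left hN))
  have hdiff := squeeze_zero_norm' hestimate (by
    simpa using (tendsto_card_not_injective_div_card m).const_mul (2 * (‖G‖ * ∏ j, ‖φ j‖)))
  have hlim := hconv _ (continuous_mul_prod_integral G φ) ⟨_, abs_mul_prod_integral_le G φ⟩
  simpa [φ, G, prod_range] using hdiff.add hlim

/-- Let `S` be a separable metrizable space. For each `N`, let
`X^{N,1}, …, X^{N,N}` be an exchangeable family of `S`-valued random variables on `(Ω_N, P_N)`
with empirical measure `μ^N = (1/N) ∑_{i<N} δ_{X^{N,i}}`, viewed as a random element of the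
space of Borel probability measures on `S` with the topology of weak convergence. Let `μ` be a
random Borel probability measure on `(Ω', P')` and assume `E[F(μ^N)] → E[F(μ)]` for every
bounded continuous `F`. Then for every `m ≥ 1`, every bounded continuous `g` on probability
measures and all bounded continuous `g_1, …, g_m : S → ℝ`,
`E[g(μ^N) ∏_{i<m} g_i(X^{N,i})] → E[g(μ) ∏_{i<m} ∫ g_i dμ]`. -/
theorem stmt8 {S : Type*} [MeasurableSpace S] [TopologicalSpace S] [BorelSpace S]
    [TopologicalSpace.SeparableSpace S] [TopologicalSpace.PseudoMetrizableSpace S]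
    (ΩN : ℕ → Type*) [∀ N, MeasurableSpace (ΩN N)]
    (P : ∀ N, Measure (ΩN N)) [∀ N, IsProbabilityMeasure (P N)]
    (X : ∀ N : ℕ, ℕ → ΩN N → S)
    (hXmeas : ∀ N, ∀ i < N, Measurable (X N i))
    (hexch : ∀ N (σ : Equiv.Perm (Fin N)),
      Measure.map (fun ω (i : Fin N) => X N (σ i : ℕ) ω) (P N) =
        Measure.map (fun ω (i : Fin N) => X N (i : ℕ) ω) (P N))
    (μN : ∀ N : ℕ, ΩN N → ProbabilityMeasure S)
    (hμN : ∀ N : ℕ, 0 < N → ∀ ω, (μN N ω : Measure S) =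
      (N : ℝ≥0∞)⁻¹ • ∑ i ∈ Finset.range N, Measure.dirac (X N i ω))
    {Ω' : Type*} [MeasurableSpace Ω'] (P' : Measure Ω') [IsProbabilityMeasure P']
    (μ : Ω' → ProbabilityMeasure S)
    (hconv : ∀ F : ProbabilityMeasure S → ℝ, Continuous F → (∃ C : ℝ, ∀ π, |F π| ≤ C) →
      Tendsto (fun N => ∫ ω, F (μN N ω) ∂(P N)) atTop (nhds (∫ ω', F (μ ω') ∂P')))
    (m : ℕ) (hm : 1 ≤ m)
    (g : ProbabilityMeasure S → ℝ) (hgcont : Continuous g) (hgbdd : ∃ C : ℝ, ∀ π, |g π| ≤ C)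
    (gi : ℕ → S → ℝ) (hgicont : ∀ i < m, Continuous (gi i))
    (hgibdd : ∀ i < m, ∃ C : ℝ, ∀ x, |gi i x| ≤ C) :
    Tendsto
      (fun N => ∫ ω, g (μN N ω) * ∏ i ∈ Finset.range m, gi i (X N i ω) ∂(P N)) atTop
      (nhds (∫ ω', g (μ ω') *
        ∏ i ∈ Finset.range m, ∫ x, gi i x ∂(μ ω' : Measure S) ∂P')) :=
  stmt8_general ΩN P X hXmeas hexch μN hμN P' μ hconv m g hgcont hgbdd gi hgicont hgibdd
end

section
/- Let (Ω, 𝔄, P) be a probability space, E and G measurable spaces and S a measurable space. Let ξ_1, …, ξ_n : Ω → E and Y : Ω → G be random variables such that ξ_1, …, ξ_n, Y are mutually independent, and let Φ : E × G → S be measurable. Set X^i := Φ(ξ_i, Y). Then for all bounded measurable g_1, …, g_n : S → ℝ, E[ ∏_{i=1}^n g_i(X^i) | σ(Y) ] = ∏_{i=1}^n E[ g_i(X^i) | σ(Y) ] P-almost surely. If in addition ξ_1, …, ξ_n are identically distributed, then for every bounded measurable g : S → ℝ and every i, E[ g(X^i) | σ(Y) ] = E[ g(X^1) | σ(Y) ]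 P-almost surely; in particular the X^i are conditionally independent and identically distributed given Y. -/
/-!
Conditionally on `Y = y`, the variable `X^i = Φ(ξ_i, Y)` becomes `Φ(ξ_i, y)`, and by independence
the `ξ_i` keep their joint law, the product of their marginals. Concretely, for `W` independent
of `Y`, `E[F(Y, W) | σ(Y)] = ∫ F(Y, x) d(law W)(x)`; applied to `W = (ξ_1, …, ξ_n)` and
`F = ∏ g_i ∘ Φ`, Fubini for the product law factors the integral into the single conditional
expectations. The same formula shows that `E[g(X^i) | σ(Y)]` only depends on the law of `ξ_i`.
-/

open MeasureTheory Set ProbabilityTheory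

universe u

/-- The family of codomains of the random variables `ξ_1, …, ξ_n, Y`: `E` for each `some i`
and `G` for `none`. -/
def xiYFam (E G : Type u) {n : ℕ} : Option (Fin n) → Type u :=
  fun o => match o with
  | none => G
  | some _ => E

def xiYFamMeas {E G : Type u} (mE : MeasurableSpace E) (mG : MeasurableSpace G) {n : ℕ} :
    ∀ o : Option (Fin n), MeasurableSpace (xiYFam E G o) :=
  fun o => match o with
  | none => mG
  | some _ => mE

section

variable {Ω β : Type*} {mΩ : MeasurableSpace Ω} {mβ : MeasurableSpace β} {P : Measure Ω}

lemma integrable_of_measurable_of_abs_le [IsFiniteMeasure P] {f : Ω → ℝ} (hf : Measurable f)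
    {C : ℝ} (hC : ∀ ω, |f ω| ≤ C) : Integrable f P :=
  .of_bound hf.aestronglyMeasurable C (.of_forall hC)

theorem ProbabilityTheory.iIndepFun.indepFun_pi_some_none {ι : Type*} [Fintype ι] {β : Option ι → Type*}
    {m : ∀ i, MeasurableSpace (β i)} {f : ∀ i, Ω → β i} (hf : iIndepFun f P)
    (hmeas : ∀ i, Measurable (f i)) :
    IndepFun (fun ω (i : ι) => f (some i) ω) (f none) P := by
  classical
  have hdisj : Disjoint (Finset.univ.map .some) ({none} : Finset (Option ι)) := by
    simp [Finset.disjoint_left]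
  exact (hf.indepFun_finset _ _ hdisj hmeas).comp
    (measurable_pi_lambda _ fun i => measurable_pi_apply
      (⟨some i, Finset.mem_map_of_mem _ (Finset.mem_univ i)⟩ : Finset.univ.map .some))
    (measurable_pi_apply (⟨none, Finset.mem_singleton_self none⟩ : ({none} : Finset (Option ι))))

variable [IsProbabilityMeasure P] {Y : Ω → β}

theorem condExp_comp_prodMk_ae_eq_integral_map_of_indepFun {α : Type*} [MeasurableSpace α]
    {W : Ω → α} (hY : Measurable Y) (hW : Measurable W) (hYW : IndepFun Y W P)
    {F : β × α → ℝ} (hF : Integrable F ((P.map Y).prod (P.map W))) :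
    P[fun ω => F (Y ω, W ω) | mβ.comap Y] =ᵐ[P] fun ω => ∫ x, F (Y ω, x) ∂(P.map W) := by
  have hYW_meas : AEMeasurable (fun ω => (Y ω, W ω)) P := hY.aemeasurable.prodMk hW.aemeasurable
  have hlaw : P.map (fun ω => (Y ω, W ω)) = (P.map Y).prod (P.map W) :=
    (indepFun_iff_map_prod_eq_prod_map_map hY.aemeasurable hW.aemeasurable).1 hYW
  have hF_int : Integrable (fun ω => F (Y ω, W ω)) P := by
    rw [← hlaw] at hF
    exact hF.comp_aemeasurable hYW_meas
  have hφ_int : Integrable (fun y => ∫ x, F (y, x) ∂(P.map W)) (P.map Y) :=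
    hF.integral_prod_left
  refine (ae_eq_condExp_of_forall_setIntegral_eq hY.comap_le hF_int (fun s _ _ => ?_) ?_
    (hφ_int.1.comp_ae_measurable' hY.aemeasurable)).symm
  · exact (hφ_int.comp_aemeasurable hY.aemeasurable).integrableOn
  · rintro _ ⟨t, ht, rfl⟩ _
    calc ∫ ω in Y ⁻¹' t, ∫ x, F (Y ω, x) ∂(P.map W) ∂P
        = ∫ y in t, ∫ x, F (y, x) ∂(P.map W) ∂(P.map Y) :=
          (setIntegral_map ht hφ_int.1 hY.aemeasurable).symm
      _ = ∫ p in t ×ˢ univ, F p ∂((P.map Y).prod (P.map W)) := by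
          rw [setIntegral_prod _ hF.integrableOn, Measure.restrict_univ]
      _ = ∫ ω in Y ⁻¹' t, F (Y ω, W ω) ∂P := by
          rw [← hlaw, setIntegral_map (ht.prod .univ) (hlaw ▸ hF.1) hYW_meas,
            mk_preimage_prod, preimage_univ, inter_univ]

theorem condExp_comp_prodMk_ae_eq_of_map_eq {α : Type*} [MeasurableSpace α] {W W' : Ω → α}
    (hY : Measurable Y) (hW : Measurable W) (hW' : Measurable W')
    (hYW : IndepFun Y W P) (hYW' : IndepFun Y W' P) (hlaw : P.map W = P.map W')
    {F : β × α → ℝ} (hF : Integrable F ((P.map Y).prod (P.map W))) :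
    P[fun ω => F (Y ω, W ω) | mβ.comap Y] =ᵐ[P] P[fun ω => F (Y ω, W' ω) | mβ.comap Y] := by
  have h' := condExp_comp_prodMk_ae_eq_integral_map_of_indepFun hY hW' hYW' (hlaw ▸ hF)
  rw [← hlaw] at h'
  exact (condExp_comp_prodMk_ae_eq_integral_map_of_indepFun hY hW hYW hF).trans h'.symm

theorem condExp_prod_comp_ae_eq_prod_condExp {ι : Type*} [Fintype ι] {α : ι → Type*}
    [∀ i, MeasurableSpace (α i)] {ξ : ∀ i, Ω → α i} (hY : Measurable Y)
    (hξ : ∀ i, Measurable (ξ i)) (hξ_indep : iIndepFun ξ P)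
    (hYξ : IndepFun Y (fun ω i => ξ i ω) P)
    {F : ∀ i, β × α i → ℝ} (hF : ∀ i, Measurable (F i)) (hFbdd : ∀ i, ∃ C, ∀ p, |F i p| ≤ C) :
    P[fun ω => ∏ i, F i (Y ω, ξ i ω) | mβ.comap Y]
      =ᵐ[P] fun ω => ∏ i, P[fun ω' => F i (Y ω', ξ i ω') | mβ.comap Y] ω := by
  choose C hC using hFbdd
  have hsingle : ∀ i, P[fun ω => F i (Y ω, ξ i ω) | mβ.comap Y]
      =ᵐ[P] fun ω => ∫ x, F i (Y ω, x) ∂(P.map (ξ i)) := fun i =>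
    condExp_comp_prodMk_ae_eq_integral_map_of_indepFun hY (hξ i)
      (hYξ.comp measurable_id (measurable_pi_apply i))
      (integrable_of_measurable_of_abs_le (hF i) (C := C i) fun p => hC i p)
  have hprod := condExp_comp_prodMk_ae_eq_integral_map_of_indepFun hY
    (measurable_pi_lambda _ hξ) hYξ (F := fun p => ∏ i, F i (p.1, p.2 i))
    (integrable_of_measurable_of_abs_le
      (Finset.measurable_prod _ fun i _ =>
        (hF i).comp (measurable_fst.prodMk ((measurable_pi_apply i).comp measurable_snd)))
      (C := ∏ i, C i) fun p => by
        rw [Finset.abs_prod]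
        exact Finset.prod_le_prod (fun i _ => abs_nonneg _) fun i _ => hC i _)
  rw [hξ_indep.map_fun_eq_pi_map fun i => (hξ i).aemeasurable] at hprod
  filter_upwards [hprod, ae_all_iff.2 hsingle] with ω hω hω_single
  rw [hω, integral_fintype_prod_eq_prod (fun i x => F i (Y ω, x))]
  exact Finset.prod_congr rfl fun i _ => (hω_single i).symm

end

/-- Let `(Ω, 𝔄, P)` be a probability space, `E, G, S` measurable spaces,
`ξ_1, …, ξ_n : Ω → E` and `Y : Ω → G` mutually independent random variables and
`Φ : E × G → S` measurable; set `X^i := Φ(ξ_i, Y)`. Then for bounded measurable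
`g_1, …, g_n : S → ℝ`, `E[∏_i g_i(X^i) | σ(Y)] = ∏_i E[g_i(X^i) | σ(Y)]` a.s.; if moreover
the `ξ_i` are identically distributed, then for every bounded measurable `g : S → ℝ` and every
`i`, `E[g(X^i) | σ(Y)] = E[g(X^1) | σ(Y)]` a.s.; in particular the `X^i` are conditionally
i.i.d. given `Y`. -/
theorem stmt10 {Ω : Type*} {E G : Type u} {S : Type*} [MeasurableSpace Ω]
    [mE : MeasurableSpace E] [mG : MeasurableSpace G] [MeasurableSpace S]
    (P : Measure Ω) [IsProbabilityMeasure P]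
    (n : ℕ) (hn : 0 < n)
    (ξ : Fin n → Ω → E) (Y : Ω → G)
    (hξmeas : ∀ i, Measurable (ξ i)) (hYmeas : Measurable Y)
    (hindep : ProbabilityTheory.iIndepFun (m := xiYFamMeas mE mG)
      (fun o : Option (Fin n) => match o with
        | none => Y
        | some i => ξ i) P)
    (Φ : E → G → S) (hΦmeas : Measurable (fun p : E × G => Φ p.1 p.2))
    (g : Fin n → S → ℝ) (hgmeas : ∀ i, Measurable (g i))
    (hgbdd : ∀ i, ∃ C : ℝ, ∀ x, |g i x| ≤ C) :
    (P[fun ω => ∏ i : Fin n, g i (Φ (ξ i ω) (Y ω)) | MeasurableSpace.comap Y mG]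
        =ᵐ[P] fun ω => ∏ i : Fin n,
          P[fun ω' => g i (Φ (ξ i ω') (Y ω')) | MeasurableSpace.comap Y mG] ω) ∧
    ((∀ i j : Fin n, Measure.map (ξ i) P = Measure.map (ξ j) P) →
      ∀ (g' : S → ℝ), Measurable g' → (∃ C : ℝ, ∀ x, |g' x| ≤ C) → ∀ i : Fin n,
        P[fun ω => g' (Φ (ξ i ω) (Y ω)) | MeasurableSpace.comap Y mG]
          =ᵐ[P] P[fun ω => g' (Φ (ξ ⟨0, hn⟩ ω) (Y ω)) | MeasurableSpace.comap Y mG]) := by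
  have hΦ_swap : Measurable fun p : G × E => Φ p.2 p.1 := hΦmeas.comp measurable_swap
  have hξY : IndepFun Y (fun ω i => ξ i ω) P :=
    (hindep.indepFun_pi_some_none (by rintro (_ | i); exacts [hYmeas, hξmeas i])).symm
  have hξiY (i : Fin n) : IndepFun Y (ξ i) P := hξY.comp measurable_id (measurable_pi_apply i)
  have hξ_indep : iIndepFun ξ P := hindep.precomp (g := some) (Option.some_injective _)
  refine ⟨condExp_prod_comp_ae_eq_prod_condExp hYmeas hξmeas hξ_indep hξY (fun i => (hgmeas i).comp hΦ_swap)
    fun i => (hgbdd i).imp fun C hC _ => hC _, ?_⟩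
  rintro hident g' hg' ⟨C, hC⟩ i
  exact condExp_comp_prodMk_ae_eq_of_map_eq (F := fun p => g' (Φ p.2 p.1)) hYmeas (hξmeas i)
    (hξmeas _) (hξiY i) (hξiY _) (hident _ _)
    (integrable_of_measurable_of_abs_le (hg'.comp hΦ_swap) fun _ => hC _)
end
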